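/- arXiv:0910.0144 — 4 statements merged into one kernel-verified Lean document; each statement's English description precedes it below -/
import Mathlib

section
/- Let a > 1, let n ≥ 1, and let A : [0,∞) → ℝ be an on/off process that equals a on a union of n pairwise disjoint on-intervals [s_i, s_i + X_i) ⊆ [0,T] (with X_i > 0) and equals 0 elsewhere on [0,T]. Let Q(t) = sup_{0≤s≤t} ∫_s^t (A(u) − 1) du and suppose Q(T) = 0 (all arriving work is served by time T). Then ∫_0^T Q(t) dt ≥ (a(a−1)/2) · Σ_{i=1}^n X_i². -/
/-!
Burst `i` alone would generate a triangular queue: it grows at rate `a - 1` during the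
on-period and then drains at rate 1, so its area is `a (a - 1) X i ^ 2 / 2`. Reich's formula
makes `Q` dominate the sum of these triangles at every time, and `Q T = 0` forces every
triangle to close before `T`; integrating over `[0, T]` gives the bound.
-/

open MeasureTheory Set Function

noncomputable def queueLength (f : ℝ → ℝ) (t : ℝ) : ℝ :=
  ⨆ u : Icc (0 : ℝ) t, ∫ v in (u : ℝ)..t, f v

section QueueLength

variable {f : ℝ → ℝ} {t t₁ t₂ T : ℝ}

lemma IntervalIntegrable.mono_Icc {a b c d : ℝ} (hf : IntervalIntegrable f volume a d)
    (hab : a ≤ b) (hbc : b ≤ c) (hcd : c ≤ d) : IntervalIntegrable f volume b c :=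
  hf.mono_set <| by
    rw [uIcc_of_le hbc, uIcc_of_le (hab.trans (hbc.trans hcd))]; exact Icc_subset_Icc hab hcd

lemma bddAbove_range_integral (hf : IntervalIntegrable f volume 0 t) :
    BddAbove (range fun u : Icc (0 : ℝ) t => ∫ v in (u : ℝ)..t, f v) := by
  have hcont := intervalIntegral.continuousOn_primitive_interval_left
    ((intervalIntegrable_iff' (by finiteness)).1 hf)
  refine (isCompact_uIcc.bddAbove_image hcont).mono ?_
  rintro _ ⟨u, rfl⟩
  exact mem_image_of_mem _ (Icc_subset_uIcc u.2)

lemma integral_le_queueLength (hf : IntervalIntegrable f volume 0 t) {u : ℝ}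
    (hu : u ∈ Icc 0 t) : ∫ v in u..t, f v ≤ queueLength f t :=
  le_ciSup (bddAbove_range_integral hf) ⟨u, hu⟩

lemma queueLength_nonneg (hf : IntervalIntegrable f volume 0 t) (ht : 0 ≤ t) :
    0 ≤ queueLength f t := by
  simpa using integral_le_queueLength hf ⟨ht, le_rfl⟩

lemma queueLength_add_integral_le (hf : IntervalIntegrable f volume 0 t₂) (h₁ : 0 ≤ t₁)
    (h₁₂ : t₁ ≤ t₂) : queueLength f t₁ + ∫ v in t₁..t₂, f v ≤ queueLength f t₂ := by
  have : Nonempty (Icc (0 : ℝ) t₁) := ⟨⟨0, le_rfl, h₁⟩⟩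
  rw [← le_sub_iff_add_le]
  refine ciSup_le fun u => le_sub_iff_add_le.2 ?_
  rw [intervalIntegral.integral_add_adjacent_intervals (hf.mono_Icc u.2.1 u.2.2 h₁₂)
    (hf.mono_Icc h₁ h₁₂ le_rfl)]
  exact integral_le_queueLength hf ⟨u.2.1, u.2.2.trans h₁₂⟩

/-- `queueLength f` is the cumulative input `∫₀ᵗ f` minus an antitone function (its running
minimum), hence integrable. -/
lemma intervalIntegrable_queueLength (hf : IntervalIntegrable f volume 0 T) (hT : 0 ≤ T) :
    IntervalIntegrable (queueLength f) volume 0 T := by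
  set F : ℝ → ℝ := fun t => ∫ v in (0 : ℝ)..t, f v
  have hF : IntervalIntegrable F volume 0 T :=
    (intervalIntegral.continuousOn_primitive_interval' hf left_mem_uIcc).intervalIntegrable
  have hanti : AntitoneOn (fun t => F t - queueLength f t) (uIcc 0 T) := by
    intro t₁ h₁ t₂ h₂ h₁₂
    rw [uIcc_of_le hT] at h₁ h₂
    have hf₂ := hf.mono_Icc le_rfl h₂.1 h₂.2
    have := queueLength_add_integral_le hf₂ h₁.1 h₁₂
    rw [← intervalIntegral.integral_interval_sub_left hf₂ (hf₂.mono_Icc le_rfl h₁.1 h₁₂)]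
      at this
    simp only [F]
    linarith
  simpa using hF.sub hanti.intervalIntegrable

end QueueLength

/-- The triangle of a burst of length `X` starting at time `0`: slope `a - 1` on `[0, X]`, then
slope `-1` until it empties at `a * X`. -/
noncomputable def burstQueue (a X t : ℝ) : ℝ := max 0 (a * min X t - t)

section BurstQueue

variable {a X t : ℝ}

lemma burstQueue_nonneg : 0 ≤ burstQueue a X t := le_max_left _ _

lemma continuous_burstQueue : Continuous (burstQueue a X) := by
  unfold burstQueue; fun_prop

lemma burstQueue_eq_zero_of_nonpos (ha : 1 ≤ a) (ht : t ≤ 0) : burstQueue a X t = 0 := by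
  have : a * min X t ≤ a * t := mul_le_mul_of_nonneg_left (min_le_right _ _) (by linarith)
  exact max_eq_left (by nlinarith)

lemma mul_le_of_burstQueue_eq_zero (hX : X ≤ t) (h : burstQueue a X t = 0) : a * X ≤ t := by
  rw [burstQueue, min_eq_left hX, max_eq_left_iff] at h
  linarith

lemma burstQueue_eq_of_pos (h : 0 < burstQueue a X t) : burstQueue a X t = a * min X t - t :=
  max_eq_right (lt_max_iff.1 h |>.resolve_left (lt_irrefl 0)).le

lemma integral_burstQueue (ha : 1 < a) (hX : 0 < X) {s T : ℝ} (hs : 0 ≤ s)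
    (hT : s + a * X ≤ T) :
    ∫ t in (0 : ℝ)..T, burstQueue a X (t - s) = a * (a - 1) / 2 * X ^ 2 := by
  have hXaX : X ≤ a * X := by nlinarith
  have hi : ∀ u v : ℝ, IntervalIntegrable (burstQueue a X) volume u v :=
    fun u v => continuous_burstQueue.intervalIntegrable u v
  rw [intervalIntegral.integral_comp_sub_right (burstQueue a X),
    ← intervalIntegral.integral_add_adjacent_intervals (hi _ 0) (hi 0 _),
    ← intervalIntegral.integral_add_adjacent_intervals (hi 0 X) (hi X _),
    ← intervalIntegral.integral_add_adjacent_intervals (hi X (a * X)) (hi _ _)]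
  have before : ∫ t in (0 - s)..0, burstQueue a X t = 0 := by
    refine intervalIntegral.integral_congr (g := 0) (fun t ht => ?_) |>.trans (by simp)
    rw [uIcc_of_le (by linarith)] at ht
    exact burstQueue_eq_zero_of_nonpos ha.le ht.2
  have rise : ∫ t in (0 : ℝ)..X, burstQueue a X t = (a - 1) * X ^ 2 / 2 := by
    have : EqOn (burstQueue a X) (fun t => (a - 1) * t) (uIcc 0 X) := fun t ht => by
      rw [uIcc_of_le hX.le] at ht
      rw [burstQueue, min_eq_right ht.2, max_eq_right (by nlinarith [ht.1])]
      ring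
    rw [intervalIntegral.integral_congr this, intervalIntegral.integral_const_mul, integral_id]
    ring
  have drain : ∫ t in X..a * X, burstQueue a X t = (a - 1) ^ 2 * X ^ 2 / 2 := by
    have : EqOn (burstQueue a X) (fun t => a * X - t) (uIcc X (a * X)) := fun t ht => by
      rw [uIcc_of_le hXaX] at ht
      rw [burstQueue, min_eq_left ht.1, max_eq_right (by linarith [ht.2])]
    rw [intervalIntegral.integral_congr this, intervalIntegral.integral_comp_sub_left (fun x => x),
      integral_id]
    ring
  have after : ∫ t in a * X..T - s, burstQueue a X t = 0 := by
    refine intervalIntegral.integral_congr (g := 0) (fun t ht => ?_) |>.trans (by simp)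
    rw [uIcc_of_le (by linarith)] at ht
    rw [Pi.zero_apply, burstQueue, min_eq_left (hXaX.trans ht.1),
      max_eq_left (by linarith [ht.1])]
  rw [before, rise, drain, after]
  ring

end BurstQueue

lemma intervalIntegrable_indicator_const {E : Set ℝ} (hE : MeasurableSet E) (r u t : ℝ) :
    IntervalIntegrable (E.indicator fun _ => r) volume u t :=
  intervalIntegrable_iff.2 (intervalIntegrable_const.def'.indicator hE)

lemma integral_indicator_const_Ico {u b c t : ℝ} (r : ℝ) (hub : u ≤ b) (hbt : b ≤ t)
    (hbc : b ≤ c) :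
    ∫ v in u..t, (Ico b c).indicator (fun _ => r) v = (min t c - b) * r := by
  rw [intervalIntegral.integral_of_le (hub.trans hbt), setIntegral_indicator measurableSet_Ico,
    setIntegral_const, measureReal_congr ((ae_eq_refl _).inter Ico_ae_eq_Ioc), Ioc_inter_Ioc,
    Real.volume_real_Ioc, max_eq_right hub, max_eq_left (sub_nonneg.2 (le_min hbt hbc)),
    smul_eq_mul]

lemma Ico_subset_Icc_iff_of_lt {a₁ b₁ a₂ b₂ : ℝ} (h : a₁ < b₁) :
    Ico a₁ b₁ ⊆ Icc a₂ b₂ ↔ a₂ ≤ a₁ ∧ b₁ ≤ b₂ := by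
  rw [← Icc_subset_Icc_iff h.le, ← closure_Ico h.ne, isClosed_Icc.closure_subset_iff]

lemma eqOn_indicator_of_onOff {ι : Type*} {I : ι → Set ℝ} {A : ℝ → ℝ} {a T : ℝ}
    (hAon : ∀ t ∈ Icc 0 T, (∃ i, t ∈ I i) → A t = a)
    (hAoff : ∀ t ∈ Icc 0 T, (¬ ∃ i, t ∈ I i) → A t = 0) :
    EqOn A ((⋃ i, I i).indicator fun _ => a) (Icc 0 T) := fun t ht => by
  by_cases h : ∃ i, t ∈ I i
  · rw [indicator_of_mem (mem_iUnion.2 h), hAon t ht h]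
  · rw [indicator_of_notMem (fun h' => h (mem_iUnion.1 h')), hAoff t ht h]

lemma intervalIntegrable_of_eqOn_indicator {E : Set ℝ} (hE : MeasurableSet E) {A : ℝ → ℝ}
    {r T : ℝ} (hT : 0 ≤ T) (h : EqOn A (E.indicator fun _ => r) (Icc 0 T)) :
    IntervalIntegrable A volume 0 T :=
  (intervalIntegrable_iff_integrableOn_Icc_of_le hT).2 <|
    ((integrableOn_const measure_Icc_lt_top.ne).indicator hE).congr_fun h.symm measurableSet_Icc

section OnOff

variable {ι : Type*} {a : ℝ} {s X : ι → ℝ} {A : ℝ → ℝ}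

lemma sum_mul_min_le_integral {S : Finset ι} {u t : ℝ} (hX : ∀ i, 0 ≤ X i)
    (hdisj : Pairwise (Disjoint on fun i => Ico (s i) (s i + X i)))
    (hut : u ≤ t) (hS : ∀ i ∈ S, s i ∈ Icc u t)
    (hA : IntervalIntegrable A volume u t) (hA0 : ∀ v ∈ Icc u t, 0 ≤ A v)
    (hAon : ∀ i, ∀ v ∈ Icc u t, v ∈ Ico (s i) (s i + X i) → a ≤ A v) :
    ∑ i ∈ S, a * min (X i) (t - s i) ≤ ∫ v in u..t, A v := by
  set E := ⋃ i ∈ S, Ico (s i) (s i + X i)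
  have hE : ∀ v ∈ Icc u t, E.indicator (fun _ => a) v ≤ A v := fun v hv => by
    by_cases hvE : v ∈ E
    · obtain ⟨i, -, hi⟩ := mem_iUnion₂.1 hvE
      rw [indicator_of_mem hvE]
      exact hAon i v hv hi
    · rw [indicator_of_notMem hvE]
      exact hA0 v hv
  calc ∑ i ∈ S, a * min (X i) (t - s i)
      = ∑ i ∈ S, ∫ v in u..t, (Ico (s i) (s i + X i)).indicator (fun _ => a) v := by
        refine Finset.sum_congr rfl fun i hi => ?_
        rw [integral_indicator_const_Ico a (hS i hi).1 (hS i hi).2 (by linarith [hX i]), mul_comm,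
          ← min_sub_sub_right, add_sub_cancel_left, min_comm]
    _ = ∫ v in u..t, E.indicator (fun _ => a) v := by
        rw [← intervalIntegral.integral_finsetSum fun i _ =>
          intervalIntegrable_indicator_const measurableSet_Ico a u t]
        simp_rw [E, Finset.indicator_biUnion_apply S _ (hdisj.set_pairwise _)]
    _ ≤ ∫ v in u..t, A v := intervalIntegral.integral_mono_on hut
        (intervalIntegrable_indicator_const
          (S.measurableSet_biUnion fun _ _ => measurableSet_Ico) a u t) hA hE

/-- Every burst still contributing at time `t` started after the earliest such burst `i₀`;
over `[s i₀, t]` it brings `a * min (X i) (t - s i)` of work, while only `t - s i₀ ≤ t - s i`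
is served. -/
lemma sum_burstQueue_le_queueLength [Fintype ι] (ha : 1 ≤ a) (hX : ∀ i, 0 ≤ X i)
    (hs : ∀ i, 0 ≤ s i) (hdisj : Pairwise (Disjoint on fun i => Ico (s i) (s i + X i)))
    {t : ℝ} (ht : 0 ≤ t)
    (hA : IntervalIntegrable A volume 0 t) (hA0 : ∀ v ∈ Icc 0 t, 0 ≤ A v)
    (hAon : ∀ i, ∀ v ∈ Icc 0 t, v ∈ Ico (s i) (s i + X i) → a ≤ A v) :
    ∑ i, burstQueue a (X i) (t - s i) ≤ queueLength (fun v => A v - 1) t := by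
  classical
  rw [← Finset.sum_filter_of_ne fun i _ h => burstQueue_nonneg.lt_of_ne' h]
  set S := Finset.univ.filter fun i => 0 < burstQueue a (X i) (t - s i)
  have hSt : ∀ i ∈ S, s i < t := fun i hi => by
    by_contra! h
    exact (Finset.mem_filter.1 hi).2.ne' (burstQueue_eq_zero_of_nonpos ha (by linarith))
  rcases S.eq_empty_or_nonempty with hS | hS
  · rw [hS, Finset.sum_empty]
    exact queueLength_nonneg (hA.sub intervalIntegrable_const) ht
  obtain ⟨i₀, hi₀, hmin⟩ := S.exists_min_image s hS
  have hi₀t : s i₀ ∈ Icc 0 t := ⟨hs i₀, (hSt i₀ hi₀).le⟩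
  have hA' := hA.mono_Icc hi₀t.1 hi₀t.2 le_rfl
  calc ∑ i ∈ S, burstQueue a (X i) (t - s i)
      = ∑ i ∈ S, (a * min (X i) (t - s i) - (t - s i)) :=
        Finset.sum_congr rfl fun i hi => burstQueue_eq_of_pos (Finset.mem_filter.1 hi).2
    _ ≤ ∑ i ∈ S, a * min (X i) (t - s i) - (t - s i₀) := by
        rw [Finset.sum_sub_distrib]
        gcongr
        exact Finset.single_le_sum (fun i hi => sub_nonneg.2 (hSt i hi).le) hi₀
    _ ≤ (∫ v in s i₀..t, A v) - (t - s i₀) := by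
        gcongr
        exact sum_mul_min_le_integral hX hdisj hi₀t.2
          (fun i hi => ⟨hmin i hi, (hSt i hi).le⟩) hA'
          (fun v hv => hA0 v ⟨hi₀t.1.trans hv.1, hv.2⟩)
          (fun i v hv => hAon i v ⟨hi₀t.1.trans hv.1, hv.2⟩)
    _ = ∫ v in s i₀..t, (A v - 1) := by
        rw [intervalIntegral.integral_sub hA' intervalIntegrable_const]
        simp
    _ ≤ queueLength (fun v => A v - 1) t :=
        integral_le_queueLength (hA.sub intervalIntegrable_const) hi₀t

lemma add_mul_le_of_sum_burstQueue_nonpos [Fintype ι] {T : ℝ} (hsX : ∀ i, s i + X i ≤ T)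
    (h : ∑ i, burstQueue a (X i) (T - s i) ≤ 0) (i : ι) : s i + a * X i ≤ T := by
  have hi := (Finset.sum_eq_zero_iff_of_nonneg fun i _ => burstQueue_nonneg).1
    (h.antisymm (Finset.sum_nonneg fun i _ => burstQueue_nonneg)) i (Finset.mem_univ i)
  linarith [mul_le_of_burstQueue_eq_zero (by linarith [hsX i]) hi]

lemma integral_sum_burstQueue [Fintype ι] {T : ℝ} (ha : 1 < a) (hX : ∀ i, 0 < X i)
    (hs : ∀ i, 0 ≤ s i) (hfit : ∀ i, s i + a * X i ≤ T) :
    ∫ t in (0 : ℝ)..T, ∑ i, burstQueue a (X i) (t - s i) = a * (a - 1) / 2 * ∑ i, X i ^ 2 := by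
  rw [intervalIntegral.integral_finsetSum (f := fun i t => burstQueue a (X i) (t - s i))
    fun i _ => (continuous_burstQueue.comp (continuous_sub_right _)).intervalIntegrable _ _,
    Finset.mul_sum]
  exact Finset.sum_congr rfl fun i _ => integral_burstQueue ha (hX i) (hs i) (hfit i)

end OnOff

/-- an on/off process equal to `a > 1` on `n ≥ 1` pairwise disjoint
on-intervals `[sᵢ, sᵢ + Xᵢ) ⊆ [0,T]` and `0` elsewhere on `[0,T]`, with queue
`Q t = sup_{0 ≤ s ≤ t} ∫_s^t (A u - 1) du`.  If the queue is empty at time `T`,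
then `∫_0^T Q ≥ (a(a-1)/2) Σ Xᵢ²`. -/
theorem stmt_1 (a T : ℝ) (ha : 1 < a) (n : ℕ) (hn : 1 ≤ n)
    (s X : Fin n → ℝ) (hX : ∀ i, 0 < X i)
    (hsub : ∀ i, Set.Ico (s i) (s i + X i) ⊆ Set.Icc 0 T)
    (hdisj : ∀ i j, i ≠ j →
      Disjoint (Set.Ico (s i) (s i + X i)) (Set.Ico (s j) (s j + X j)))
    (A : ℝ → ℝ)
    (hAon : ∀ t ∈ Set.Icc (0:ℝ) T,
      (∃ i, t ∈ Set.Ico (s i) (s i + X i)) → A t = a)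
    (hAoff : ∀ t ∈ Set.Icc (0:ℝ) T,
      (¬ ∃ i, t ∈ Set.Ico (s i) (s i + X i)) → A t = 0)
    (Q : ℝ → ℝ)
    (hQ : ∀ t, Q t = ⨆ u : Set.Icc (0:ℝ) t, ∫ v in (u : ℝ)..t, (A v - 1))
    (hQT : Q T = 0) :
    ∫ t in (0:ℝ)..T, Q t ≥ (a * (a - 1) / 2) * ∑ i, (X i) ^ 2 := by
  have hIcc : ∀ i, 0 ≤ s i ∧ s i + X i ≤ T := fun i =>
    (Ico_subset_Icc_iff_of_lt (lt_add_of_pos_right _ (hX i))).1 (hsub i)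
  have hT : 0 ≤ T := by linarith [hIcc ⟨0, hn⟩, hX ⟨0, hn⟩]
  have hAE := eqOn_indicator_of_onOff hAon hAoff
  have hA : IntervalIntegrable A volume 0 T :=
    intervalIntegrable_of_eqOn_indicator (MeasurableSet.iUnion fun _ => measurableSet_Ico) hT hAE
  have hQ' : Q = queueLength (fun v => A v - 1) := funext hQ
  have hpt : ∀ t ∈ Icc 0 T, ∑ i, burstQueue a (X i) (t - s i) ≤ Q t := fun t ht =>
    hQ' ▸ sum_burstQueue_le_queueLength ha.le (fun i => (hX i).le) (fun i => (hIcc i).1)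
      (fun i j hij => hdisj i j hij) ht.1 (hA.mono_Icc le_rfl ht.1 ht.2)
      (fun v hv => hAE ⟨hv.1, hv.2.trans ht.2⟩ ▸ indicator_nonneg (fun _ _ => by linarith) v)
      (fun i v hv hi => (hAon v ⟨hv.1, hv.2.trans ht.2⟩ ⟨i, hi⟩).ge)
  have hfit :=
    add_mul_le_of_sum_burstQueue_nonpos (fun i => (hIcc i).2) (hQT ▸ hpt T ⟨hT, le_rfl⟩)
  rw [ge_iff_le, ← integral_sum_burstQueue ha hX (fun i => (hIcc i).1) hfit]
  exact intervalIntegral.integral_mono_on hT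
    ((continuous_finsetSum _ fun i _ =>
      continuous_burstQueue.comp (continuous_sub_right _)).intervalIntegrable _ _)
    (hQ' ▸ intervalIntegrable_queueLength (hA.sub intervalIntegrable_const) hT) hpt
end

section
/- (Theorem 1, expectation form.) Fix a > 1 and λ ∈ (0,1), let (X_i)_{i≥1} be independent, identically distributed positive random variables with 0 < E[X_1] < ∞ and E[X_1²] = ∞, and let A′ be the reordered on/off process built from (X_i) with cycle endpoints T_N = (a/λ)·Σ_{i=1}^N X_i and queue Q(t) = sup_{0≤s≤t} ∫_s^t (A′(u) − 1) du. Then the expected time-averaged queue length over cycle endpoints tends to infinity: E[(1/T_N) ∫_0^{T_N} Q(t) dt] → ∞ as N → ∞. -/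
/-!
Taking `s = T i` in Reich's formula gives `Q t ≥ (a - 1) (t - T i)` during the `i`-th on-period,
and `Q ≥ 0` throughout, so pathwise `(1 / T N) ∫₀^{T N} Q ≥ c · ∑ X_i² / ∑ X_i` with
`c = λ (a - 1) / (2 a)`.

In expectation, write `∑ X_i² / ∑ X_i` as the sum of the terms `X_j² / (X_j + R_j)`, where `R_j` is
the sum of the other `N - 1` variables. Truncating `X_j` at `N` makes the term at least
`min (X_j, N)² / (N + R_j)`, a product of independent factors; Jensen's inequality bounds
`E[1 / (N + R_j)]` below by `1 / (N (1 + E X))`, so the expectation is at least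
`E[min (X, N)²] / (1 + E X)`, which tends to infinity because `E[X²] = ∞`.
-/

open MeasureTheory ProbabilityTheory Filter Set
open scoped ENNReal Topology

section Reich

variable {f : ℝ → ℝ}

theorem IntervalIntegrable.of_mem_Icc {a b x y : ℝ} (hf : IntervalIntegrable f volume a b)
    (hx : x ∈ Icc a b) (hy : y ∈ Icc a b) : IntervalIntegrable f volume x y :=
  hf.mono_set (uIcc_subset_uIcc (Icc_subset_uIcc hx) (Icc_subset_uIcc hy))

theorem IntervalIntegrable.continuousOn_primitive_Icc {T : ℝ}
    (hf : IntervalIntegrable f volume 0 T) (hT : 0 ≤ T) :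
    ContinuousOn (fun u => ∫ v in 0..u, f v) (Icc 0 T) := by
  simpa only [uIcc_of_le hT] using
    intervalIntegral.continuousOn_primitive_interval' hf left_mem_uIcc

theorem iSup_integral_eq_sub_sInf {t : ℝ} (hf : IntervalIntegrable f volume 0 t) (ht : 0 ≤ t) :
    ⨆ u : Icc (0 : ℝ) t, ∫ v in (u : ℝ)..t, f v =
      (∫ v in 0..t, f v) - sInf ((fun u => ∫ v in 0..u, f v) '' Icc 0 t) := by
  set G := fun u => ∫ v in 0..u, f v
  have h0 : (0 : ℝ) ∈ Icc 0 t := left_mem_Icc.2 ht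
  have hsub : ∀ u ∈ Icc 0 t, ∫ v in u..t, f v = G t - G u := fun u hu =>
    (intervalIntegral.integral_interval_sub_left hf (hf.of_mem_Icc h0 hu)).symm
  obtain ⟨u₀, hu₀, hmin⟩ := isCompact_Icc.exists_isMinOn ⟨0, h0⟩
    (hf.continuousOn_primitive_Icc ht)
  have hbound : ∀ u : Icc (0 : ℝ) t, ∫ v in (u : ℝ)..t, f v ≤ G t - G u₀ := fun u => by
    rw [hsub u u.2]; exact sub_le_sub_left (hmin u.2) _
  have : Nonempty (Icc (0 : ℝ) t) := ⟨⟨0, h0⟩⟩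
  rw [(show IsLeast (G '' Icc 0 t) (G u₀) from
    ⟨mem_image_of_mem G hu₀, by rintro _ ⟨u, hu, rfl⟩; exact hmin hu⟩).csInf_eq]
  exact le_antisymm (ciSup_le hbound)
    (le_ciSup_of_le ⟨_, forall_mem_range.2 hbound⟩ ⟨u₀, hu₀⟩ (hsub u₀ hu₀).ge)

theorem integral_le_iSup_integral {T u t : ℝ} (hf : IntervalIntegrable f volume 0 T)
    (hu : u ∈ Icc 0 t) (htT : t ≤ T) :
    ∫ v in u..t, f v ≤ ⨆ u : Icc (0 : ℝ) t, ∫ v in (u : ℝ)..t, f v := by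
  have ht : 0 ≤ t := hu.1.trans hu.2
  have hf' : IntervalIntegrable f volume 0 t :=
    hf.of_mem_Icc (left_mem_Icc.2 (ht.trans htT)) ⟨ht, htT⟩
  rw [iSup_integral_eq_sub_sInf hf' ht, ← intervalIntegral.integral_interval_sub_left hf'
    (hf'.of_mem_Icc (left_mem_Icc.2 ht) hu)]
  gcongr
  exact csInf_le (isCompact_Icc.image_of_continuousOn
    (hf'.continuousOn_primitive_Icc ht)).bddBelow (mem_image_of_mem _ hu)

/-- The primitive minus its running minimum: a continuous function minus an antitone one. -/
theorem integrableOn_iSup_integral {T : ℝ} (hf : IntervalIntegrable f volume 0 T) :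
    IntegrableOn (fun t => ⨆ u : Icc (0 : ℝ) t, ∫ v in (u : ℝ)..t, f v) (Icc 0 T) := by
  rcases lt_or_ge T 0 with hT | hT
  · simp [Icc_eq_empty_of_lt hT]
  set G := fun u => ∫ v in 0..u, f v
  have hG := hf.continuousOn_primitive_Icc hT
  have hanti : AntitoneOn (fun t => sInf (G '' Icc 0 t)) (Icc 0 T) := fun s hs t ht hst =>
    csInf_le_csInf (isCompact_Icc.image_of_continuousOn
        (hG.mono (Icc_subset_Icc_right ht.2))).bddBelow
      ⟨G 0, mem_image_of_mem G (left_mem_Icc.2 hs.1)⟩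
      (image_mono (Icc_subset_Icc_right hst))
  refine (hG.integrableOn_Icc.sub (hanti.integrableOn_isCompact isCompact_Icc)).congr_fun
    (fun t ht => (iSup_integral_eq_sub_sInf
      (hf.of_mem_Icc (left_mem_Icc.2 hT) ht) ht.1).symm) measurableSet_Icc

end Reich

theorem div_two_mul_sq_le_integral {Q : ℝ → ℝ} {s x e k : ℝ} (hx : 0 ≤ x) (he : s + x ≤ e)
    (hQ : IntervalIntegrable Q volume s e) (hnonneg : ∀ t ∈ Icc s e, 0 ≤ Q t)
    (hramp : ∀ t ∈ Icc s (s + x), k * (t - s) ≤ Q t) :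
    k / 2 * x ^ 2 ≤ ∫ t in s..e, Q t := by
  have hsx : s ≤ s + x := le_add_of_nonneg_right hx
  have hs : s ∈ Icc s e := left_mem_Icc.2 (hsx.trans he)
  have hm : s + x ∈ Icc s e := ⟨hsx, he⟩
  have hramp_int : ∫ t in s..s + x, k * (t - s) = k / 2 * x ^ 2 := by
    rw [intervalIntegral.integral_comp_sub_right (fun t => k * t),
      intervalIntegral.integral_const_mul, sub_self, add_sub_cancel_left, integral_id]
    ring
  have hfirst := intervalIntegral.integral_mono_on hsx
    ((by fun_prop : Continuous fun t => k * (t - s)).intervalIntegrable _ _)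
    (hQ.of_mem_Icc hs hm) hramp
  have hsecond := intervalIntegral.integral_nonneg (μ := volume) he
    fun t ht => hnonneg t ⟨hsx.trans ht.1, ht.2⟩
  rw [← intervalIntegral.integral_add_adjacent_intervals (hQ.of_mem_Icc hs hm)
    (hQ.of_mem_Icc hm (right_mem_Icc.2 (hsx.trans he)))]
  linarith

theorem intervalIntegrable_of_eqOn_Ico {g : ℝ → ℝ} {s e c : ℝ} (hse : s ≤ e)
    (h : EqOn g (fun _ => c) (Ico s e)) : IntervalIntegrable g volume s e :=
  intervalIntegrable_const.congr_uIoo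
    (by rw [uIoo_of_le hse]; exact (h.mono Ioo_subset_Ico_self).symm)

theorem intervalIntegral_eq_of_eqOn_Ico {g : ℝ → ℝ} {s e c : ℝ} (hse : s ≤ e)
    (h : EqOn g (fun _ => c) (Ico s e)) : ∫ v in s..e, g v = (e - s) * c := by
  rw [intervalIntegral.integral_congr_uIoo (g := fun _ => c)
    (by rw [uIoo_of_le hse]; exact h.mono Ioo_subset_Ico_self)]
  simp

section OnOff

variable {a r : ℝ} {X T : ℕ → ℝ} {A : ℝ → ℝ}

theorem sum_sq_le_integral_queue (hr : 1 ≤ r) (hX : ∀ i, 0 ≤ X i)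
    (hT : ∀ N, T N = r * ∑ i ∈ Finset.range N, X i)
    (hAon : ∀ i t, T i ≤ t → t < T i + X i → A t = a)
    (hAoff : ∀ i t, T i + X i ≤ t → t < T (i + 1) → A t = 0) (N : ℕ) :
    (a - 1) / 2 * ∑ i ∈ Finset.range N, X i ^ 2 ≤
      ∫ t in (0 : ℝ)..T N, ⨆ u : Icc (0 : ℝ) t, ∫ v in (u : ℝ)..t, (A v - 1) := by
  have hT0 : T 0 = 0 := by simp [hT]
  have hT_nonneg : ∀ i, 0 ≤ T i := fun i => by
    rw [hT]; exact mul_nonneg (zero_le_one.trans hr) (Finset.sum_nonneg fun j _ => hX j)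
  have hon : ∀ i, T i ≤ T i + X i := fun i => le_add_of_nonneg_right (hX i)
  have hoff : ∀ i, T i + X i ≤ T (i + 1) := fun i => by
    rw [hT, hT, Finset.sum_range_succ, mul_add]; nlinarith [hX i]
  have hint : ∀ i, IntervalIntegrable (fun v => A v - 1) volume (T i) (T (i + 1)) := fun i =>
    (intervalIntegrable_of_eqOn_Ico (c := a - 1) (hon i) fun t ht => by
        simp [hAon i t ht.1 ht.2]).trans
      (intervalIntegrable_of_eqOn_Ico (c := -1) (hoff i) fun t ht => by
        simp [hAoff i t ht.1 ht.2])
  have hint₀ : ∀ n, IntervalIntegrable (fun v => A v - 1) volume 0 (T n) := fun n =>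
    hT0 ▸ IntervalIntegrable.trans_iterate fun k _ => hint k
  have hQint : ∀ i, IntervalIntegrable
      (fun t => ⨆ u : Icc (0 : ℝ) t, ∫ v in (u : ℝ)..t, (A v - 1)) volume (T i) (T (i + 1)) :=
    fun i => (intervalIntegrable_iff_integrableOn_Icc_of_le ((hon i).trans (hoff i))).2
      ((integrableOn_iSup_integral (hint₀ (i + 1))).mono_set
        (Icc_subset_Icc_left (hT_nonneg i)))
  have hcycle : ∀ i, (a - 1) / 2 * X i ^ 2 ≤
      ∫ t in T i..T (i + 1), ⨆ u : Icc (0 : ℝ) t, ∫ v in (u : ℝ)..t, (A v - 1) := by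
    intro i
    refine div_two_mul_sq_le_integral (hX i) (hoff i) (hQint i) (fun t ht => ?_) fun t ht => ?_
    · -- `u = t` in Reich's formula
      simpa using integral_le_iSup_integral (hint₀ (i + 1))
        ⟨(hT_nonneg i).trans ht.1, le_rfl⟩ ht.2
    · -- `u = T i`, the start of the on-period
      have := integral_le_iSup_integral (hint₀ (i + 1)) ⟨hT_nonneg i, ht.1⟩
        (ht.2.trans (hoff i))
      rwa [intervalIntegral_eq_of_eqOn_Ico (c := a - 1) ht.1
        (fun v hv => by simp [hAon i v hv.1 (hv.2.trans_le ht.2)]), mul_comm] at this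
  have hsplit := intervalIntegral.sum_integral_adjacent_intervals (n := N) fun k _ => hQint k
  rw [hT0] at hsplit
  rw [← hsplit, Finset.mul_sum]
  exact Finset.sum_le_sum fun i _ => hcycle i

theorem mul_sum_sq_div_sum_le_timeAverage (hr : 1 ≤ r) (hX : ∀ i, 0 ≤ X i)
    (hT : ∀ N, T N = r * ∑ i ∈ Finset.range N, X i)
    (hAon : ∀ i t, T i ≤ t → t < T i + X i → A t = a)
    (hAoff : ∀ i t, T i + X i ≤ t → t < T (i + 1) → A t = 0) (N : ℕ) :
    (a - 1) / (2 * r) * ((∑ i ∈ Finset.range N, X i ^ 2) / ∑ i ∈ Finset.range N, X i) ≤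
      1 / T N * ∫ t in (0 : ℝ)..T N, ⨆ u : Icc (0 : ℝ) t, ∫ v in (u : ℝ)..t, (A v - 1) := by
  have hqueue := sum_sq_le_integral_queue hr hX hT hAon hAoff N
  rw [hT] at hqueue ⊢
  rcases (Finset.sum_nonneg fun i _ => hX i : 0 ≤ ∑ i ∈ Finset.range N, X i).eq_or_lt with
    hS | hS
  · simp [← hS]
  calc (a - 1) / (2 * r) * ((∑ i ∈ Finset.range N, X i ^ 2) / ∑ i ∈ Finset.range N, X i)
      = 1 / (r * ∑ i ∈ Finset.range N, X i) * ((a - 1) / 2 * ∑ i ∈ Finset.range N, X i ^ 2) := by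
        field_simp
    _ ≤ _ := by gcongr

end OnOff

theorem sq_min_div_add_le {x s N : ℝ} (hx : 0 < x) (hs : 0 ≤ s) (hN : 0 < N) :
    min x N ^ 2 / (N + s) ≤ x ^ 2 / (x + s) := by
  rcases le_total x N with h | h
  · rw [min_eq_left h]
    exact div_le_div_of_nonneg_left (sq_nonneg x) (by positivity) (by linarith)
  · rw [min_eq_right h, div_le_div_iff₀ (by positivity) (by positivity)]
    nlinarith [mul_nonneg (mul_nonneg hN.le hx.le) (sub_nonneg.2 h),
      mul_nonneg hs (sq_nonneg (x - N)), mul_nonneg (mul_nonneg hs hN.le) (sub_nonneg.2 h)]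

theorem tendsto_lintegral_ofReal_min_sq {α : Type*} [MeasurableSpace α] {μ : Measure α}
    {Y : α → ℝ} (hY : Measurable Y) (hY_nonneg : ∀ ω, 0 ≤ Y ω)
    (hsq : ∫⁻ ω, ENNReal.ofReal (Y ω ^ 2) ∂μ = ⊤) :
    Tendsto (fun n : ℕ => ∫⁻ ω, ENNReal.ofReal (min (Y ω) n ^ 2) ∂μ) atTop (𝓝 ⊤) := by
  refine hsq ▸ lintegral_tendsto_of_tendsto_of_monotone
    (fun n => ((hY.min measurable_const).pow_const 2).ennreal_ofReal.aemeasurable)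
    (ae_of_all _ fun ω n n' hnn' => ENNReal.ofReal_le_ofReal (pow_le_pow_left₀
      (le_min (hY_nonneg ω) n.cast_nonneg) (min_le_min_left _ (Nat.cast_le.2 hnn')) 2))
    (ae_of_all _ fun ω => tendsto_atTop_of_eventually_const (i₀ := ⌈Y ω⌉₊) fun n hn => ?_)
  rw [min_eq_left ((Nat.le_ceil _).trans (Nat.cast_le.2 hn))]

theorem ofReal_inv_integral_le_lintegral {α : Type*} [MeasurableSpace α] {μ : Measure α}
    [IsProbabilityMeasure μ] {Y : α → ℝ} {c : ℝ} (hc : 0 < c) (hY : Integrable Y μ)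
    (hcY : ∀ ω, c ≤ Y ω) :
    ENNReal.ofReal (∫ ω, Y ω ∂μ)⁻¹ ≤ ∫⁻ ω, ENNReal.ofReal (Y ω)⁻¹ ∂μ := by
  have hY_pos : ∀ ω, 0 < Y ω := fun ω => hc.trans_le (hcY ω)
  have hinv : Integrable (fun ω => (Y ω)⁻¹) μ :=
    (integrable_const c⁻¹).mono' hY.aestronglyMeasurable.inv₀ (ae_of_all _ fun ω => by
      rw [Real.norm_of_nonneg (inv_nonneg.2 (hY_pos ω).le)]
      exact inv_anti₀ hc (hcY ω))
  have hjensen : (∫ ω, Y ω ∂μ)⁻¹ ≤ ∫ ω, (Y ω)⁻¹ ∂μ := by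
    simpa using ((convexOn_zpow (-1)).subset (Ici_subset_Ioi.2 hc) (convex_Ici c)).map_integral_le
      (continuousOn_id.zpow₀ (-1) fun x hx => Or.inl (hc.trans_le hx).ne')
      isClosed_Ici (ae_of_all _ hcY) hY (by simpa [Function.comp_def] using hinv)
  rw [← ofReal_integral_eq_lintegral_ofReal hinv (ae_of_all _ fun ω => inv_nonneg.2 (hY_pos ω).le)]
  exact ENNReal.ofReal_le_ofReal hjensen

section IID

variable {Ω : Type*} [MeasurableSpace Ω] {μ : Measure Ω} [IsProbabilityMeasure μ]
  {X : ℕ → Ω → ℝ}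

theorem ofReal_inv_mul_le_lintegral_inv_add_sum (hpos : ∀ i ω, 0 < X i ω)
    (hident : ∀ i, IdentDistrib (X i) (X 0) μ μ) (hint : Integrable (X 0) μ) {N : ℕ}
    (hN : 0 < N) {s : Finset ℕ} (hs : s.card ≤ N) :
    ENNReal.ofReal (N * (1 + ∫ ω, X 0 ω ∂μ))⁻¹ ≤
      ∫⁻ ω, ENNReal.ofReal (N + ∑ i ∈ s, X i ω)⁻¹ ∂μ := by
  have hN' : (0 : ℝ) < N := Nat.cast_pos.2 hN
  have hR_nonneg : ∀ ω, 0 ≤ ∑ i ∈ s, X i ω := fun ω =>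
    Finset.sum_nonneg fun i _ => (hpos i ω).le
  have hR_int : Integrable (fun ω => ∑ i ∈ s, X i ω) μ :=
    integrable_finsetSum _ fun i _ => (hident i).integrable_iff.2 hint
  have hR_mean : ∫ ω, ∑ i ∈ s, X i ω ∂μ ≤ N * ∫ ω, X 0 ω ∂μ := by
    rw [integral_finsetSum _ fun i _ => (hident i).integrable_iff.2 hint,
      Finset.sum_congr rfl fun i _ => (hident i).integral_eq, Finset.sum_const, nsmul_eq_mul]
    gcongr
    exact integral_nonneg fun ω => (hpos 0 ω).le
  refine le_trans (ENNReal.ofReal_le_ofReal ?_)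
    (ofReal_inv_integral_le_lintegral hN' ((integrable_const _).add hR_int)
      fun ω => le_add_of_nonneg_right (hR_nonneg ω))
  rw [integral_add (integrable_const _) hR_int, integral_const, probReal_univ, one_smul]
  gcongr
  · exact add_pos_of_pos_of_nonneg hN' (integral_nonneg hR_nonneg)
  · linarith

theorem lintegral_min_sq_mul_le_lintegral_sq_div_sum (hmeas : ∀ i, Measurable (X i))
    (hpos : ∀ i ω, 0 < X i ω) (hindep : iIndepFun X μ)
    (hident : ∀ i, IdentDistrib (X i) (X 0) μ μ) (hint : Integrable (X 0) μ) {N j : ℕ}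
    (hj : j ∈ Finset.range N) :
    (∫⁻ ω, ENNReal.ofReal (min (X 0 ω) N ^ 2) ∂μ) *
        ENNReal.ofReal (N * (1 + ∫ ω, X 0 ω ∂μ))⁻¹ ≤
      ∫⁻ ω, ENNReal.ofReal (X j ω ^ 2 / ∑ i ∈ Finset.range N, X i ω) ∂μ := by
  set s := (Finset.range N).erase j
  set R : Ω → ℝ := fun ω => ∑ i ∈ s, X i ω
  have hR_nonneg : ∀ ω, 0 ≤ R ω := fun ω => Finset.sum_nonneg fun i _ => (hpos i ω).le
  have hN : 0 < N := Nat.zero_lt_of_lt (Finset.mem_range.1 hj)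
  have hjensen : ENNReal.ofReal (N * (1 + ∫ ω, X 0 ω ∂μ))⁻¹ ≤
      ∫⁻ ω, ENNReal.ofReal (N + R ω)⁻¹ ∂μ :=
    ofReal_inv_mul_le_lintegral_inv_add_sum hpos hident hint hN
      (Finset.card_erase_le.trans (Finset.card_range N).le)
  have hφ : Measurable fun x : ℝ => ENNReal.ofReal (min x N ^ 2) :=
    ((measurable_id.min measurable_const).pow_const 2).ennreal_ofReal
  have hψ : Measurable fun x : ℝ => ENNReal.ofReal (N + x)⁻¹ :=
    (measurable_const.add measurable_id).inv.ennreal_ofReal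
  have hXR : IndepFun (X j) R μ := by
    convert (hindep.indepFun_finsetSum_of_notMem hmeas
      (Finset.notMem_erase j (Finset.range N))).symm
    exact funext fun ω => (Finset.sum_apply ω s X).symm
  have hfactor : ∫⁻ ω, ENNReal.ofReal (min (X j ω) N ^ 2) * ENNReal.ofReal (N + R ω)⁻¹ ∂μ =
      (∫⁻ ω, ENNReal.ofReal (min (X j ω) N ^ 2) ∂μ) * ∫⁻ ω, ENNReal.ofReal (N + R ω)⁻¹ ∂μ :=
    lintegral_mul_eq_lintegral_mul_lintegral_of_indepFun'' (hφ.comp (hmeas j)).aemeasurable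
      (hψ.comp (Finset.measurable_sum _ fun i _ => hmeas i)).aemeasurable
      (hXR.comp hφ hψ)
  calc _ ≤ (∫⁻ ω, ENNReal.ofReal (min (X j ω) N ^ 2) ∂μ) *
        ∫⁻ ω, ENNReal.ofReal (N + R ω)⁻¹ ∂μ := by
        have hsame : ∫⁻ ω, ENNReal.ofReal (min (X j ω) N ^ 2) ∂μ =
            ∫⁻ ω, ENNReal.ofReal (min (X 0 ω) N ^ 2) ∂μ := ((hident j).comp hφ).lintegral_eq
        rw [hsame]
        gcongr
    _ = _ := hfactor.symm
    _ ≤ _ := lintegral_mono fun ω => by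
        rw [← ENNReal.ofReal_mul (by positivity), ← Finset.add_sum_erase _ _ hj, ← div_eq_mul_inv]
        exact ENNReal.ofReal_le_ofReal
          (sq_min_div_add_le (hpos j ω) (hR_nonneg ω) (Nat.cast_pos.2 hN))

theorem ofReal_inv_mul_lintegral_min_sq_le (hmeas : ∀ i, Measurable (X i))
    (hpos : ∀ i ω, 0 < X i ω) (hindep : iIndepFun X μ)
    (hident : ∀ i, IdentDistrib (X i) (X 0) μ μ) (hint : Integrable (X 0) μ) {N : ℕ}
    (hN : 0 < N) :
    ENNReal.ofReal (1 + ∫ ω, X 0 ω ∂μ)⁻¹ * ∫⁻ ω, ENNReal.ofReal (min (X 0 ω) N ^ 2) ∂μ ≤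
      ∫⁻ ω, ENNReal.ofReal
        ((∑ i ∈ Finset.range N, X i ω ^ 2) / ∑ i ∈ Finset.range N, X i ω) ∂μ := by
  have hconst : ENNReal.ofReal (1 + ∫ ω, X 0 ω ∂μ)⁻¹ =
      N * ENNReal.ofReal (N * (1 + ∫ ω, X 0 ω ∂μ))⁻¹ := by
    rw [← ENNReal.ofReal_natCast, ← ENNReal.ofReal_mul N.cast_nonneg, mul_inv,
      ← mul_assoc, mul_inv_cancel₀ (Nat.cast_ne_zero.2 hN.ne'), one_mul]
  have hterm_meas : ∀ j, Measurable fun ω =>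
      ENNReal.ofReal (X j ω ^ 2 / ∑ i ∈ Finset.range N, X i ω) := fun j =>
    (((hmeas j).pow_const 2).div (Finset.measurable_sum _ fun i _ => hmeas i)).ennreal_ofReal
  calc _ = ∑ j ∈ Finset.range N, (∫⁻ ω, ENNReal.ofReal (min (X 0 ω) N ^ 2) ∂μ) *
        ENNReal.ofReal (N * (1 + ∫ ω, X 0 ω ∂μ))⁻¹ := by
        rw [Finset.sum_const, Finset.card_range, nsmul_eq_mul, hconst]; ring
    _ ≤ ∑ j ∈ Finset.range N,
        ∫⁻ ω, ENNReal.ofReal (X j ω ^ 2 / ∑ i ∈ Finset.range N, X i ω) ∂μ :=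
      Finset.sum_le_sum fun j hj => lintegral_min_sq_mul_le_lintegral_sq_div_sum hmeas hpos
        hindep hident hint hj
    _ = _ := by
      rw [← lintegral_finsetSum _ fun j _ => hterm_meas j]
      refine lintegral_congr fun ω => ?_
      rw [Finset.sum_div, ENNReal.ofReal_sum_of_nonneg fun i _ =>
        div_nonneg (sq_nonneg _) (Finset.sum_nonneg fun k _ => (hpos k ω).le)]

end IID

theorem stmt_6_general {Ω : Type*} [MeasureSpace Ω] [IsProbabilityMeasure (ℙ : Measure Ω)]
    (a lam : ℝ) (ha : 1 < a) (hlam : lam ∈ Set.Ioo (0:ℝ) 1)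
    (X : ℕ → Ω → ℝ) (hmeas : ∀ i, Measurable (X i))
    (hpos : ∀ i ω, 0 < X i ω)
    (hindep : iIndepFun X ℙ)
    (hident : ∀ i, IdentDistrib (X i) (X 0) ℙ ℙ)
    (hint : Integrable (X 0) ℙ)
    (hsq : ∫⁻ ω, ENNReal.ofReal ((X 0 ω) ^ 2) = ⊤)
    (T : Ω → ℕ → ℝ)
    (hT : ∀ ω N, T ω N = (a / lam) * ∑ i ∈ Finset.range N, X i ω)
    (A : Ω → ℝ → ℝ)
    (hAon : ∀ ω i, ∀ t, T ω i ≤ t → t < T ω i + X i ω → A ω t = a)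
    (hAoff : ∀ ω i, ∀ t, T ω i + X i ω ≤ t → t < T ω (i + 1) → A ω t = 0)
    (Q : Ω → ℝ → ℝ)
    (hQ : ∀ ω t, Q ω t = ⨆ u : Set.Icc (0:ℝ) t, ∫ v in (u : ℝ)..t, (A ω v - 1)) :
    Tendsto
      (fun N => ∫⁻ ω, ENNReal.ofReal ((1 / T ω N) * ∫ t in (0:ℝ)..(T ω N), Q ω t))
      atTop (nhds ⊤) := by
  obtain ⟨hlam₀, hlam₁⟩ := hlam
  set c := (a - 1) / (2 * (a / lam))
  have hr : 1 ≤ a / lam := by rw [le_div_iff₀ hlam₀]; linarith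
  have hc : 0 < c := div_pos (by linarith) (by positivity)
  have hmean : 0 ≤ ∫ ω, X 0 ω := integral_nonneg fun ω => (hpos 0 ω).le
  have hlim := ENNReal.Tendsto.const_mul (a := ENNReal.ofReal c * ENNReal.ofReal (1 + ∫ ω, X 0 ω)⁻¹)
    (tendsto_lintegral_ofReal_min_sq (hmeas 0) (fun ω => (hpos 0 ω).le) hsq)
    (Or.inl ENNReal.top_ne_zero)
  rw [ENNReal.mul_top (by positivity)] at hlim
  refine tendsto_nhds_top_mono hlim ?_
  filter_upwards [eventually_gt_atTop 0] with N hN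
  calc _ ≤ ENNReal.ofReal c * ∫⁻ ω, ENNReal.ofReal
          ((∑ i ∈ Finset.range N, X i ω ^ 2) / ∑ i ∈ Finset.range N, X i ω) := by
        rw [mul_assoc]
        gcongr
        exact ofReal_inv_mul_lintegral_min_sq_le hmeas hpos hindep hident hint hN
    _ = ∫⁻ ω, ENNReal.ofReal
          (c * ((∑ i ∈ Finset.range N, X i ω ^ 2) / ∑ i ∈ Finset.range N, X i ω)) := by
        rw [← lintegral_const_mul' _ _ ENNReal.ofReal_ne_top]
        simp_rw [ENNReal.ofReal_mul hc.le]
    _ ≤ _ := lintegral_mono fun ω => ENNReal.ofReal_le_ofReal <| by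
        rw [funext (hQ ω)]
        exact mul_sum_sq_div_sum_le_timeAverage hr (fun i => (hpos i ω).le) (hT ω) (hAon ω)
          (hAoff ω) N

/-- Theorem 1, expectation form: with the reordered on/off process
built from an i.i.d. sequence of positive random variables with finite positive
mean and infinite second moment, the expected time-averaged queue length over the
cycle endpoints `T N` tends to infinity (expectations taken in `[0,∞]`). -/
theorem stmt_6 {Ω : Type*} [MeasureSpace Ω] [IsProbabilityMeasure (ℙ : Measure Ω)]
    (a lam : ℝ) (ha : 1 < a) (hlam : lam ∈ Set.Ioo (0:ℝ) 1)
    (X : ℕ → Ω → ℝ) (hmeas : ∀ i, Measurable (X i))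
    (hpos : ∀ i ω, 0 < X i ω)
    (hindep : iIndepFun X ℙ)
    (hident : ∀ i, IdentDistrib (X i) (X 0) ℙ ℙ)
    (hint : Integrable (X 0) ℙ)
    (hmean : 0 < ∫ ω, X 0 ω)
    (hsq : ∫⁻ ω, ENNReal.ofReal ((X 0 ω) ^ 2) = ⊤)
    (T : Ω → ℕ → ℝ)
    (hT : ∀ ω N, T ω N = (a / lam) * ∑ i ∈ Finset.range N, X i ω)
    (A : Ω → ℝ → ℝ)
    (hAon : ∀ ω i, ∀ t, T ω i ≤ t → t < T ω i + X i ω → A ω t = a)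
    (hAoff : ∀ ω i, ∀ t, T ω i + X i ω ≤ t → t < T ω (i + 1) → A ω t = 0)
    (Q : Ω → ℝ → ℝ)
    (hQ : ∀ ω t, Q ω t = ⨆ u : Set.Icc (0:ℝ) t, ∫ v in (u : ℝ)..t, (A ω v - 1)) :
    Tendsto
      (fun N => ∫⁻ ω, ENNReal.ofReal ((1 / T ω N) * ∫ t in (0:ℝ)..(T ω N), Q ω t))
      atTop (nhds ⊤) :=
  stmt_6_general a lam ha hlam X hmeas hpos hindep hident hint hsq T hT A hAon hAoff Q hQ
end

section
/- Fix a > 1 and λ ∈ (0,1), let (X_i)_{i≥1} be independent, identically distributed positive random variables with 0 < E[X_1] and E[X_1²] < ∞, and let A′ be the reordered on/off process built from (X_i) with cycle endpoints T_N = (a/λ)·Σ_{i=1}^N X_i and queue Q(t) = sup_{0≤s≤t} ∫_s^t (A′(u) − 1) du. Then almost surely (1/T_N) ∫_0^{T_N} Q(t) dt → λ(a−1)·E[X_1²]/(2·E[X_1]) as N → ∞; in particular the long-run mean queue length of the reordered process is finite exactly when E[X_1²] is finite. -/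
/-!
With the net input `F t = ∫₀ᵗ (A - 1)`, the queue is `Q t = F t - min_{[0,t]} F`. Along the
`i`-th cycle `F` rises with slope `a - 1` for time `Xᵢ` and then falls with slope `-1`; as the cycle
has length `(a/λ) Xᵢ ≥ a Xᵢ`, `F` is back at its running minimum at every cycle endpoint. So on
each cycle `Q` is a triangle of height `(a - 1) Xᵢ` over a base of length `a Xᵢ`, whence
`∫₀^{T_N} Q = a (a - 1)/2 · ∑ Xᵢ²`, and the strong law of large numbers for `Xᵢ` and `Xᵢ²`
gives the limit.
-/

open MeasureTheory ProbabilityTheory Filter Finset Set Topology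

theorem intervalIntegrable_of_eqOn_Ioo {f : ℝ → ℝ} {c s t : ℝ} (hst : s ≤ t)
    (h : EqOn f (fun _ => c) (Ioo s t)) : IntervalIntegrable f volume s t :=
  intervalIntegrable_const.congr_uIoo (uIoo_of_le hst ▸ h.symm)

theorem intervalIntegral_eq_of_eqOn_Ioo {f : ℝ → ℝ} {c s t : ℝ} (hst : s ≤ t)
    (h : EqOn f (fun _ => c) (Ioo s t)) : ∫ v in s..t, f v = c * (t - s) := by
  rw [intervalIntegral.integral_congr_Ioo_of_le hst h]
  simp [mul_comm]

theorem integral_clipped_tent {a r x : ℝ} (ha : 1 ≤ a) (har : a ≤ r) (hx : 0 ≤ x) :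
    ∫ t in (0:ℝ)..r * x, max (min ((a - 1) * t) (a * x - t)) 0 = a * (a - 1) / 2 * x ^ 2 := by
  have hcont : Continuous fun t : ℝ => max (min ((a - 1) * t) (a * x - t)) 0 := by fun_prop
  have hx_ax : x ≤ a * x := le_mul_of_one_le_left hx ha
  have hax_rx : a * x ≤ r * x := mul_le_mul_of_nonneg_right har hx
  rw [← intervalIntegral.integral_add_adjacent_intervals (b := a * x)
      (hcont.intervalIntegrable _ _) (hcont.intervalIntegrable _ _),
    ← intervalIntegral.integral_add_adjacent_intervals (b := x)
      (hcont.intervalIntegrable _ _) (hcont.intervalIntegrable _ _)]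
  have rise : ∫ t in (0:ℝ)..x, max (min ((a - 1) * t) (a * x - t)) 0
      = ∫ t in (0:ℝ)..x, (a - 1) * t := by
    refine intervalIntegral.integral_congr fun t ht => ?_
    rw [uIcc_of_le hx] at ht
    rw [min_eq_left (by nlinarith [ht.2]), max_eq_left (by nlinarith [ht.1])]
  have fall : ∫ t in x..a * x, max (min ((a - 1) * t) (a * x - t)) 0
      = ∫ t in x..a * x, (a * x - t) := by
    refine intervalIntegral.integral_congr fun t ht => ?_
    rw [uIcc_of_le hx_ax] at ht
    rw [min_eq_right (by nlinarith [ht.1]), max_eq_left (by linarith [ht.2])]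
  have idle : ∫ t in a * x..r * x, max (min ((a - 1) * t) (a * x - t)) 0 = 0 := by
    refine (intervalIntegral.integral_congr (g := fun _ => (0:ℝ)) fun t ht => ?_).trans (by simp)
    rw [uIcc_of_le hax_rx] at ht
    exact max_eq_right (min_le_of_right_le (by linarith [ht.1]))
  rw [rise, fall, idle, intervalIntegral.integral_const_mul, integral_id,
    intervalIntegral.integral_sub intervalIntegrable_const intervalIntegral.intervalIntegrable_id,
    integral_id, intervalIntegral.integral_const, smul_eq_mul]
  ring

/-- `r` is the ratio of cycle length to on-period (`a / λ` in the paper); `a ≤ r` lets the queue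
drain within every cycle. -/
structure IsOnOffProcess (a r : ℝ) (x T : ℕ → ℝ) (A : ℝ → ℝ) : Prop where
  one_le : 1 ≤ a
  le_ratio : a ≤ r
  nonneg : ∀ i, 0 ≤ x i
  endpoint : ∀ N, T N = r * ∑ i ∈ range N, x i
  on_period : ∀ i t, T i ≤ t → t < T i + x i → A t = a
  off_period : ∀ i t, T i + x i ≤ t → t < T (i + 1) → A t = 0

noncomputable def netInput (A : ℝ → ℝ) (t : ℝ) : ℝ := ∫ v in (0:ℝ)..t, (A v - 1)

noncomputable def reichQueue (A : ℝ → ℝ) (t : ℝ) : ℝ :=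
  ⨆ u : Icc (0:ℝ) t, ∫ v in (u : ℝ)..t, (A v - 1)

namespace IsOnOffProcess

variable {a r : ℝ} {x T : ℕ → ℝ} {A : ℝ → ℝ}

theorem endpoint_zero (h : IsOnOffProcess a r x T A) : T 0 = 0 := by
  simp [h.endpoint]

theorem endpoint_succ (h : IsOnOffProcess a r x T A) (i : ℕ) : T (i + 1) = T i + r * x i := by
  simp [h.endpoint, sum_range_succ, mul_add]

theorem on_period_end_le (h : IsOnOffProcess a r x T A) (i : ℕ) : T i + x i ≤ T (i + 1) := by
  rw [h.endpoint_succ]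
  nlinarith [h.nonneg i, h.one_le, h.le_ratio]

theorem drain_time_le (h : IsOnOffProcess a r x T A) (i : ℕ) : T i + a * x i ≤ T (i + 1) := by
  rw [h.endpoint_succ]
  nlinarith [h.nonneg i, h.le_ratio]

theorem endpoint_mono (h : IsOnOffProcess a r x T A) : Monotone T :=
  monotone_nat_of_le_succ fun i =>
    (le_add_of_nonneg_right (h.nonneg i)).trans (h.on_period_end_le i)

theorem endpoint_nonneg (h : IsOnOffProcess a r x T A) (i : ℕ) : 0 ≤ T i :=
  h.endpoint_zero ▸ h.endpoint_mono (Nat.zero_le i)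

theorem eqOn_on_period (h : IsOnOffProcess a r x T A) (i : ℕ) :
    EqOn (fun v => A v - 1) (fun _ => a - 1) (Ioo (T i) (T i + x i)) :=
  fun v hv => by simp [h.on_period i v hv.1.le hv.2]

theorem eqOn_off_period (h : IsOnOffProcess a r x T A) (i : ℕ) :
    EqOn (fun v => A v - 1) (fun _ => -1) (Ioo (T i + x i) (T (i + 1))) :=
  fun v hv => by simp [h.off_period i v hv.1.le hv.2]

theorem integral_cycle (h : IsOnOffProcess a r x T A) {i : ℕ} {t : ℝ} (h₁ : T i ≤ t)
    (h₂ : t ≤ T (i + 1)) :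
    ∫ v in T i..t, (A v - 1) = min ((a - 1) * (t - T i)) (T i + a * x i - t) := by
  have hon := h.eqOn_on_period i
  have hoff := (h.eqOn_off_period i).mono (Ioo_subset_Ioo_right h₂)
  have hx := h.nonneg i
  have ha := h.one_le
  rcases le_total t (T i + x i) with ht | ht
  · rw [intervalIntegral_eq_of_eqOn_Ioo h₁ (hon.mono (Ioo_subset_Ioo_right ht)),
      min_eq_left (by nlinarith)]
  · rw [← intervalIntegral.integral_add_adjacent_intervals (b := T i + x i)
        (intervalIntegrable_of_eqOn_Ioo (by linarith) hon)
        (intervalIntegrable_of_eqOn_Ioo ht hoff),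
      intervalIntegral_eq_of_eqOn_Ioo (by linarith) hon,
      intervalIntegral_eq_of_eqOn_Ioo ht hoff,
      min_eq_right (by nlinarith)]
    ring

theorem intervalIntegrable_sub_one (h : IsOnOffProcess a r x T A) (N : ℕ) :
    IntervalIntegrable (fun v => A v - 1) volume 0 (T N) := by
  induction N with
  | zero => rw [h.endpoint_zero]
  | succ i ih =>
    exact ih.trans <| (intervalIntegrable_of_eqOn_Ioo (le_add_of_nonneg_right (h.nonneg i))
      (h.eqOn_on_period i)).trans (intervalIntegrable_of_eqOn_Ioo (h.on_period_end_le i)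
      (h.eqOn_off_period i))

theorem integral_eq_netInput_sub (h : IsOnOffProcess a r x T A) {N : ℕ} {u t : ℝ}
    (hu : u ∈ Icc 0 (T N)) (ht : t ∈ Icc 0 (T N)) :
    ∫ v in u..t, (A v - 1) = netInput A t - netInput A u := by
  have hint (s : ℝ) (hs : s ∈ Icc 0 (T N)) : IntervalIntegrable (fun v => A v - 1) volume 0 s :=
    (h.intervalIntegrable_sub_one N).mono_set <| uIcc_subset_uIcc_left <| by
      rwa [uIcc_of_le (h.endpoint_nonneg N)]
  exact (intervalIntegral.integral_interval_sub_left (hint t ht) (hint u hu)).symm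

theorem netInput_cycle (h : IsOnOffProcess a r x T A) {i : ℕ} {t : ℝ} (h₁ : T i ≤ t)
    (h₂ : t ≤ T (i + 1)) :
    netInput A t = netInput A (T i) + min ((a - 1) * (t - T i)) (T i + a * x i - t) := by
  have hmem (s : ℝ) (hs₁ : T i ≤ s) (hs₂ : s ≤ T (i + 1)) : s ∈ Icc 0 (T (i + 1)) :=
    ⟨(h.endpoint_nonneg i).trans hs₁, hs₂⟩
  rw [← h.integral_cycle h₁ h₂,
    h.integral_eq_netInput_sub (hmem _ le_rfl (h.endpoint_mono i.le_succ)) (hmem t h₁ h₂)]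
  ring

theorem netInput_endpoint_le (h : IsOnOffProcess a r x T A) (i : ℕ) {u : ℝ} (hu₀ : 0 ≤ u)
    (hu : u ≤ T i) : netInput A (T i) ≤ netInput A u := by
  induction i generalizing u with
  | zero => rw [le_antisymm (h.endpoint_zero ▸ hu) hu₀, h.endpoint_zero]
  | succ i ih =>
    have hstep : netInput A (T (i + 1)) ≤ netInput A (T i) + (T i + a * x i - T (i + 1)) := by
      rw [h.netInput_cycle (h.endpoint_mono i.le_succ) le_rfl]
      gcongr
      exact min_le_right _ _
    have hdrain := h.drain_time_le i
    rcases le_total u (T i) with hui | hiu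
    · exact hstep.trans (by linarith [ih hu₀ hui])
    · refine hstep.trans ?_
      rw [h.netInput_cycle hiu hu]
      gcongr
      exact le_min (by nlinarith [h.one_le]) (by linarith)

theorem netInput_ge (h : IsOnOffProcess a r x T A) {i : ℕ} {t u : ℝ} (ht : t ≤ T (i + 1))
    (hu₀ : 0 ≤ u) (hut : u ≤ t) :
    netInput A (T i) + min 0 (min ((a - 1) * (t - T i)) (T i + a * x i - t)) ≤ netInput A u := by
  rcases le_total u (T i) with hui | hiu
  · exact (add_le_of_nonpos_right (min_le_left (0 : ℝ) _)).trans
      (h.netInput_endpoint_le i hu₀ hui)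
  · rw [h.netInput_cycle hiu (hut.trans ht), add_le_add_iff_left]
    refine le_min ?_ ?_
    · exact (min_le_left _ _).trans (by nlinarith [h.one_le])
    · exact (min_le_right _ _).trans ((min_le_right _ _).trans (by linarith))

theorem reichQueue_cycle (h : IsOnOffProcess a r x T A) {i : ℕ} {t : ℝ} (h₁ : T i ≤ t)
    (h₂ : t ≤ T (i + 1)) :
    reichQueue A t = max (min ((a - 1) * (t - T i)) (T i + a * x i - t)) 0 := by
  set m := min ((a - 1) * (t - T i)) (T i + a * x i - t)
  have ht₀ : 0 ≤ t := (h.endpoint_nonneg i).trans h₁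
  have hval (u : Icc 0 t) : ∫ v in (u : ℝ)..t, (A v - 1) = netInput A t - netInput A u :=
    h.integral_eq_netInput_sub ⟨u.2.1, u.2.2.trans h₂⟩ ⟨ht₀, h₂⟩
  have hFt := h.netInput_cycle h₁ h₂
  -- `netInput A` attains its minimum over `[0, t]` at `T i` or at `t`
  have hle (u : Icc 0 t) : ∫ v in (u : ℝ)..t, (A v - 1) ≤ max m 0 := by
    have := h.netInput_ge h₂ u.2.1 u.2.2
    rw [hval]
    rcases le_total m 0 with hm | hm
    · rw [min_eq_right hm] at this
      exact le_max_of_le_right (by linarith)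
    · rw [min_eq_left hm] at this
      exact le_max_of_le_left (by linarith)
  have hbdd : BddAbove (Set.range fun u : Icc 0 t => ∫ v in (u : ℝ)..t, (A v - 1)) :=
    ⟨max m 0, forall_mem_range.2 hle⟩
  have : Nonempty (Icc 0 t) := (Set.nonempty_Icc.2 ht₀).to_subtype
  refine le_antisymm (ciSup_le hle) (max_le ?_ ?_)
  · refine le_ciSup_of_le hbdd ⟨T i, h.endpoint_nonneg i, h₁⟩ ?_
    rw [hval]
    linarith
  · refine le_ciSup_of_le hbdd ⟨t, ht₀, le_rfl⟩ ?_
    rw [hval, sub_self]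

theorem eqOn_reichQueue_cycle (h : IsOnOffProcess a r x T A) (i : ℕ) :
    EqOn (reichQueue A) (fun t => max (min ((a - 1) * (t - T i)) (a * x i - (t - T i))) 0)
      (uIcc (T i) (T (i + 1))) := by
  intro t ht
  rw [uIcc_of_le (h.endpoint_mono i.le_succ)] at ht
  rw [h.reichQueue_cycle ht.1 ht.2]
  ring_nf

theorem intervalIntegrable_reichQueue_cycle (h : IsOnOffProcess a r x T A) (i : ℕ) :
    IntervalIntegrable (reichQueue A) volume (T i) (T (i + 1)) :=
  ((by fun_prop : Continuous fun t => max (min ((a - 1) * (t - T i)) (a * x i - (t - T i))) 0)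
    |>.intervalIntegrable _ _).congr ((h.eqOn_reichQueue_cycle i).symm.mono uIoc_subset_uIcc)

theorem integral_reichQueue_cycle (h : IsOnOffProcess a r x T A) (i : ℕ) :
    ∫ t in T i..T (i + 1), reichQueue A t = a * (a - 1) / 2 * x i ^ 2 := by
  rw [intervalIntegral.integral_congr (h.eqOn_reichQueue_cycle i),
    intervalIntegral.integral_comp_sub_right (fun s => max (min ((a - 1) * s) (a * x i - s)) 0),
    sub_self, h.endpoint_succ, add_sub_cancel_left,
    integral_clipped_tent h.one_le h.le_ratio (h.nonneg i)]

theorem integral_reichQueue (h : IsOnOffProcess a r x T A) (N : ℕ) :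
    ∫ t in (0:ℝ)..T N, reichQueue A t = ∑ i ∈ range N, a * (a - 1) / 2 * x i ^ 2 := by
  rw [← h.endpoint_zero, ← intervalIntegral.sum_integral_adjacent_intervals
    fun i _ => h.intervalIntegrable_reichQueue_cycle i]
  exact sum_congr rfl fun i _ => h.integral_reichQueue_cycle i

theorem tendsto_timeAverage_reichQueue (h : IsOnOffProcess a r x T A) {μ m₂ : ℝ} (hμ : μ ≠ 0)
    (h₁ : Tendsto (fun n : ℕ => (∑ i ∈ range n, x i) / n) atTop (𝓝 μ))
    (h₂ : Tendsto (fun n : ℕ => (∑ i ∈ range n, x i ^ 2) / n) atTop (𝓝 m₂)) :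
    Tendsto (fun N => 1 / T N * ∫ t in (0:ℝ)..T N, reichQueue A t) atTop
      (𝓝 (a * (a - 1) / (2 * r) * (m₂ / μ))) := by
  refine ((h₂.div h₁ hμ).const_mul _).congr' ?_
  filter_upwards [eventually_ne_atTop 0] with N hN
  rw [Pi.div_apply, h.integral_reichQueue, h.endpoint N, ← mul_sum,
    div_div_div_cancel_right₀ (Nat.cast_ne_zero.2 hN)]
  ring

end IsOnOffProcess

theorem stmt_7_general {Ω : Type*} [MeasureSpace Ω] [IsProbabilityMeasure (ℙ : Measure Ω)]
    (a lam : ℝ) (ha : 1 < a) (hlam : lam ∈ Set.Ioo (0:ℝ) 1)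
    (X : ℕ → Ω → ℝ)
    (hpos : ∀ i ω, 0 < X i ω)
    (hindep : iIndepFun X ℙ)
    (hident : ∀ i, IdentDistrib (X i) (X 0) ℙ ℙ)
    (hint : Integrable (X 0) ℙ)
    (hmean : 0 < ∫ ω, X 0 ω)
    (hsq : Integrable (fun ω => (X 0 ω) ^ 2) ℙ)
    (T : Ω → ℕ → ℝ)
    (hT : ∀ ω N, T ω N = (a / lam) * ∑ i ∈ Finset.range N, X i ω)
    (A : Ω → ℝ → ℝ)
    (hAon : ∀ ω i, ∀ t, T ω i ≤ t → t < T ω i + X i ω → A ω t = a)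
    (hAoff : ∀ ω i, ∀ t, T ω i + X i ω ≤ t → t < T ω (i + 1) → A ω t = 0)
    (Q : Ω → ℝ → ℝ)
    (hQ : ∀ ω t, Q ω t = ⨆ u : Set.Icc (0:ℝ) t, ∫ v in (u : ℝ)..t, (A ω v - 1)) :
    ∀ᵐ ω ∂ℙ, Tendsto
      (fun N => (1 / T ω N) * ∫ t in (0:ℝ)..(T ω N), Q ω t)
      atTop (nhds (lam * (a - 1) * (∫ ω', (X 0 ω') ^ 2) / (2 * ∫ ω', X 0 ω'))) := by
  have hsq_indep := hindep.comp (fun _ y => y ^ 2) fun _ => by fun_prop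
  filter_upwards [strong_law_ae_real X hint (fun i j hij => hindep.indepFun hij) hident,
    strong_law_ae_real (fun i ω => X i ω ^ 2) hsq (fun i j hij => hsq_indep.indepFun hij)
      fun i => (hident i).comp (measurable_id.pow_const 2)] with ω h₁ h₂
  have hproc : IsOnOffProcess a (a / lam) (X · ω) (T ω) (A ω) :=
    { one_le := ha.le
      le_ratio := le_div_self (by linarith) hlam.1 hlam.2.le
      nonneg := fun i => (hpos i ω).le
      endpoint := hT ω
      on_period := hAon ω
      off_period := hAoff ω }
  rw [show Q ω = reichQueue (A ω) from funext (hQ ω)]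
  convert hproc.tendsto_timeAverage_reichQueue hmean.ne' h₁ h₂ using 2
  field_simp

/-- if instead `E[X₁²] < ∞` (and `E[X₁] > 0`), then for the
reordered on/off process the time-averaged queue length over the cycle endpoints
converges almost surely to `λ(a-1) E[X₁²] / (2 E[X₁])`, which is finite. -/
theorem stmt_7 {Ω : Type*} [MeasureSpace Ω] [IsProbabilityMeasure (ℙ : Measure Ω)]
    (a lam : ℝ) (ha : 1 < a) (hlam : lam ∈ Set.Ioo (0:ℝ) 1)
    (X : ℕ → Ω → ℝ) (hmeas : ∀ i, Measurable (X i))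
    (hpos : ∀ i ω, 0 < X i ω)
    (hindep : iIndepFun X ℙ)
    (hident : ∀ i, IdentDistrib (X i) (X 0) ℙ ℙ)
    (hint : Integrable (X 0) ℙ)
    (hmean : 0 < ∫ ω, X 0 ω)
    (hsq : Integrable (fun ω => (X 0 ω) ^ 2) ℙ)
    (T : Ω → ℕ → ℝ)
    (hT : ∀ ω N, T ω N = (a / lam) * ∑ i ∈ Finset.range N, X i ω)
    (A : Ω → ℝ → ℝ)
    (hAon : ∀ ω i, ∀ t, T ω i ≤ t → t < T ω i + X i ω → A ω t = a)
    (hAoff : ∀ ω i, ∀ t, T ω i + X i ω ≤ t → t < T ω (i + 1) → A ω t = 0)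
    (Q : Ω → ℝ → ℝ)
    (hQ : ∀ ω t, Q ω t = ⨆ u : Set.Icc (0:ℝ) t, ∫ v in (u : ℝ)..t, (A ω v - 1)) :
    ∀ᵐ ω ∂ℙ, Tendsto
      (fun N => (1 / T ω N) * ∫ t in (0:ℝ)..(T ω N), Q ω t)
      atTop (nhds (lam * (a - 1) * (∫ ω', (X 0 ω') ^ 2) / (2 * ∫ ω', X 0 ω'))) :=
  stmt_7_general a lam ha hlam X hpos hindep hident hint hmean hsq T hT A hAon hAoff Q hQ
end

section
/- Fix q > 0, a > 1 and X > 0. Let A(t) = a on [0, X) and A(t) = 0 on [X, X + F), where F = max((a−1)X, (a−1)aX²/(2q) − X), and let Q(t) = sup_{0≤s≤t} ∫_s^t (A(u) − 1) du. Then the queue drains completely within the off-period (Q(X + F) = 0) and the mean queue length over the cycle is at most q: ∫_0^{X+F} Q(t) dt ≤ q·(X + F), with equality exactly when (a−1)aX²/(2q) − X ≥ (a−1)X. -/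
open MeasureTheory Set

/-- a single cycle with on-period of length `X` at rate `a > 1`
followed by an off-period of length `F = max((a-1)X, (a-1)aX²/(2q) - X)`.
The queue drains completely within the off-period, and the mean queue length over
the cycle is at most `q`, with equality exactly when
`(a-1)aX²/(2q) - X ≥ (a-1)X`. -/
theorem stmt_13 (q a X : ℝ) (hq : 0 < q) (ha : 1 < a) (hX : 0 < X)
    (F : ℝ) (hF : F = max ((a - 1) * X) ((a - 1) * a * X ^ 2 / (2 * q) - X))
    (A : ℝ → ℝ)
    (hAon : ∀ t, 0 ≤ t → t < X → A t = a)
    (hAoff : ∀ t, X ≤ t → t < X + F → A t = 0)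
    (Q : ℝ → ℝ)
    (hQ : ∀ t, Q t = ⨆ u : Set.Icc (0:ℝ) t, ∫ v in (u : ℝ)..t, (A v - 1)) :
    Q (X + F) = 0 ∧
    (∫ t in (0:ℝ)..(X + F), Q t) ≤ q * (X + F) ∧
    ((∫ t in (0:ℝ)..(X + F), Q t) = q * (X + F) ↔
      (a - 1) * X ≤ (a - 1) * a * X ^ 2 / (2 * q) - X) := by
  set f : ℝ → ℝ := fun v => if v < X then a - 1 else (-1:ℝ) with hfdef
  set Φ : ℝ → ℝ := fun t => min ((a - 1) * t) (a * X - t) with hΦdef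
  have hFX : (a - 1) * X ≤ F := hF ▸ le_max_left _ _
  have hFpos : 0 < F := lt_of_lt_of_le (by nlinarith) hFX
  have haX : a * X ≤ X + F := by nlinarith
  have hfint : ∀ u t : ℝ, IntervalIntegrable f volume u t := by
    intro u t
    apply Antitone.intervalIntegrable
    intro v w hvw
    by_cases h1 : v < X <;> by_cases h2 : w < X <;> simp [hfdef, h1, h2] <;> linarith
  have hne : ∀ᵐ v : ℝ, v ≠ X := by
    refine ae_iff.2 ?_
    simpa using measure_singleton (α := ℝ) (μ := volume) X
  have hneF : ∀ᵐ v : ℝ, v ≠ X + F := by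
    refine ae_iff.2 ?_
    simpa using measure_singleton (α := ℝ) (μ := volume) (X + F)
  -- integral of f on intervals inside [0, X] and [X, ∞)
  have hstep1 : ∀ u t : ℝ, u ≤ t → t ≤ X → ∫ v in u..t, f v = (a - 1) * (t - u) := by
    intro u t hut htX
    have : ∫ v in u..t, f v = ∫ v in u..t, (a - 1 : ℝ) := by
      apply intervalIntegral.integral_congr_ae
      filter_upwards [hne] with v hv hvmem
      rw [Set.uIoc_of_le hut] at hvmem
      have : v < X := lt_of_le_of_ne (hvmem.2.trans htX) hv
      simp [hfdef, this]
    rw [this, intervalIntegral.integral_const, smul_eq_mul]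
    ring
  have hstep2 : ∀ u t : ℝ, X ≤ u → u ≤ t → ∫ v in u..t, f v = -(t - u) := by
    intro u t hXu hut
    have : ∫ v in u..t, f v = ∫ v in u..t, (-1 : ℝ) := by
      apply intervalIntegral.integral_congr
      intro v hv
      rw [Set.uIcc_of_le hut] at hv
      have : ¬ v < X := not_lt.2 (hXu.trans hv.1)
      simp [hfdef, this]
    rw [this, intervalIntegral.integral_const, smul_eq_mul]
    ring
  have hint0 : ∀ t : ℝ, 0 ≤ t → ∫ v in (0:ℝ)..t, f v = Φ t := by
    intro t ht
    rcases le_total t X with h | h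
    · rw [hstep1 0 t ht h]
      have h2 : Φ t = (a - 1) * t := min_eq_left (by nlinarith)
      rw [h2]; ring
    · have key : (∫ v in (0:ℝ)..X, f v) + ∫ v in X..t, f v = ∫ v in (0:ℝ)..t, f v :=
        intervalIntegral.integral_add_adjacent_intervals (hfint _ _) (hfint _ _)
      rw [← key, hstep1 0 X hX.le le_rfl, hstep2 X t le_rfl h]
      have h2 : Φ t = a * X - t := min_eq_right (by nlinarith)
      rw [h2]; ring
  have hintf : ∀ u t : ℝ, 0 ≤ u → u ≤ t → ∫ v in u..t, f v = Φ t - Φ u := by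
    intro u t hu hut
    rw [← hint0 t (hu.trans hut), ← hint0 u hu]
    exact (intervalIntegral.integral_interval_sub_left (hfint 0 t) (hfint 0 u)).symm
  have hintA : ∀ u t : ℝ, 0 ≤ u → u ≤ t → t ≤ X + F →
      ∫ v in u..t, (A v - 1) = Φ t - Φ u := by
    intro u t hu hut htF
    rw [← hintf u t hu hut]
    apply intervalIntegral.integral_congr_ae
    filter_upwards [hneF] with v hv hvmem
    rw [Set.uIoc_of_le hut] at hvmem
    have hv0 : 0 ≤ v := hu.trans hvmem.1.le
    have hvF : v < X + F := lt_of_le_of_ne (hvmem.2.trans htF) hv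
    rcases lt_or_ge v X with hvX | hvX
    · rw [hAon v hv0 hvX]; simp [hfdef, hvX]
    · rw [hAoff v hvX hvF]; simp [hfdef, not_lt.2 hvX]
  -- explicit formula for Q
  have hΦ0 : Φ 0 = 0 := by
    show min ((a - 1) * 0) (a * X - 0) = 0
    rw [min_eq_left (by nlinarith)]; ring
  have hQform : ∀ t : ℝ, 0 ≤ t → t ≤ X + F → Q t = max (Φ t) 0 := by
    intro t ht htF
    rw [hQ]
    have hsub : ∀ u : Set.Icc (0:ℝ) t, (∫ v in (u : ℝ)..t, (A v - 1)) = Φ t - Φ u :=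
      fun u => hintA u t u.2.1 u.2.2 htF
    have hiS : (⨆ u : Set.Icc (0:ℝ) t, ∫ v in (u : ℝ)..t, (A v - 1))
        = ⨆ u : Set.Icc (0:ℝ) t, (Φ t - Φ u) := iSup_congr hsub
    rw [hiS]
    haveI : Nonempty (Set.Icc (0:ℝ) t) := ⟨⟨0, Set.left_mem_Icc.2 ht⟩⟩
    have hub : ∀ u : Set.Icc (0:ℝ) t, Φ t - Φ (u : ℝ) ≤ max (Φ t) 0 := by
      intro u
      obtain ⟨u, hu0, hut⟩ := u
      have h1 : min 0 (Φ t) ≤ Φ u := by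
        apply le_min
        · exact (min_le_left _ _).trans (by nlinarith)
        · exact (min_le_right _ _).trans ((min_le_right _ _).trans (by simp; linarith))
      have h2 : Φ t - min 0 (Φ t) ≤ max (Φ t) 0 := by
        rcases le_total 0 (Φ t) with h | h
        · rw [min_eq_left h]; simpa using le_max_left (Φ t) 0
        · rw [min_eq_right h]; simpa using le_max_right (Φ t) 0
      linarith
    have hbdd : BddAbove (Set.range fun u : Set.Icc (0:ℝ) t => Φ t - Φ (u : ℝ)) := by
      refine ⟨max (Φ t) 0, ?_⟩
      rintro x ⟨u, rfl⟩
      exact hub u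
    apply le_antisymm (ciSup_le hub)
    apply max_le
    · have := le_ciSup hbdd (⟨0, Set.left_mem_Icc.2 ht⟩ : Set.Icc (0:ℝ) t)
      simpa [hΦ0] using this
    · have := le_ciSup hbdd (⟨t, Set.right_mem_Icc.2 ht⟩ : Set.Icc (0:ℝ) t)
      simpa using this
  have h0XF : (0:ℝ) ≤ X + F := by linarith
  -- Part 1
  have hQend : Q (X + F) = 0 := by
    rw [hQform (X + F) h0XF le_rfl]
    have : Φ (X + F) ≤ 0 := (min_le_right _ _).trans (by linarith)
    exact max_eq_right this
  -- the integral of Q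
  have hg : Continuous (fun t : ℝ => max (Φ t) 0) := by
    apply Continuous.max _ continuous_const
    exact Continuous.min (continuous_const.mul continuous_id) (continuous_const.sub continuous_id)
  have hgi : ∀ u t : ℝ, IntervalIntegrable (fun t : ℝ => max (Φ t) 0) volume u t :=
    fun u t => hg.intervalIntegrable u t
  have hQg : (∫ t in (0:ℝ)..(X + F), Q t) = ∫ t in (0:ℝ)..(X + F), max (Φ t) 0 := by
    apply intervalIntegral.integral_congr
    intro t htm
    rw [Set.uIcc_of_le h0XF] at htm
    exact hQform t htm.1 htm.2
  have hsplit1 : (∫ t in (0:ℝ)..X, max (Φ t) 0) + (∫ t in X..(a * X), max (Φ t) 0)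
      = ∫ t in (0:ℝ)..(a * X), max (Φ t) 0 :=
    intervalIntegral.integral_add_adjacent_intervals (hgi _ _) (hgi _ _)
  have hsplit2 : (∫ t in (0:ℝ)..(a * X), max (Φ t) 0) + (∫ t in (a * X)..(X + F), max (Φ t) 0)
      = ∫ t in (0:ℝ)..(X + F), max (Φ t) 0 :=
    intervalIntegral.integral_add_adjacent_intervals (hgi _ _) (hgi _ _)
  have hI1 : (∫ t in (0:ℝ)..X, max (Φ t) 0) = (a - 1) * X ^ 2 / 2 := by
    have h1 : (∫ t in (0:ℝ)..X, max (Φ t) 0) = ∫ t in (0:ℝ)..X, (a - 1) * t := by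
      apply intervalIntegral.integral_congr
      intro t htm
      rw [Set.uIcc_of_le hX.le] at htm
      show max (Φ t) 0 = _
      have e1 : Φ t = (a - 1) * t := min_eq_left (by nlinarith [htm.1, htm.2])
      rw [e1]
      exact max_eq_left (by nlinarith [htm.1])
    rw [h1, intervalIntegral.integral_const_mul, integral_id]
    ring
  have hI2 : (∫ t in X..(a * X), max (Φ t) 0) = (a - 1) ^ 2 * X ^ 2 / 2 := by
    have h1 : (∫ t in X..(a * X), max (Φ t) 0) = ∫ t in X..(a * X), (a * X - t) := by
      apply intervalIntegral.integral_congr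
      intro t htm
      rw [Set.uIcc_of_le (by nlinarith)] at htm
      show max (Φ t) 0 = _
      have e1 : Φ t = a * X - t := min_eq_right (by nlinarith [htm.1, htm.2])
      rw [e1]
      exact max_eq_left (by nlinarith [htm.2])
    rw [h1, intervalIntegral.integral_sub (intervalIntegrable_const) intervalIntegral.intervalIntegrable_id,
      intervalIntegral.integral_const, integral_id, smul_eq_mul]
    ring
  have hI3 : (∫ t in (a * X)..(X + F), max (Φ t) 0) = 0 := by
    have h1 : (∫ t in (a * X)..(X + F), max (Φ t) 0) = ∫ t in (a * X)..(X + F), (0:ℝ) := by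
      apply intervalIntegral.integral_congr
      intro t htm
      rw [Set.uIcc_of_le haX] at htm
      show max (Φ t) 0 = _
      have e1 : Φ t ≤ 0 := (min_le_right _ _).trans (by linarith [htm.1])
      exact max_eq_right e1
    rw [h1, intervalIntegral.integral_zero]
  have hI : (∫ t in (0:ℝ)..(X + F), Q t) = (a - 1) * a * X ^ 2 / 2 := by
    rw [hQg, ← hsplit2, ← hsplit1, hI1, hI2, hI3]
    ring
  have hCF : (a - 1) * a * X ^ 2 / (2 * q) - X ≤ F := hF ▸ le_max_right _ _
  refine ⟨hQend, ?_, ?_⟩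
  · rw [hI]
    have h2 : (a - 1) * a * X ^ 2 / (2 * q) ≤ X + F := by linarith
    calc (a - 1) * a * X ^ 2 / 2 = q * ((a - 1) * a * X ^ 2 / (2 * q)) := by
          field_simp
      _ ≤ q * (X + F) := by nlinarith
  · rw [hI]
    constructor
    · intro h
      have hXF : X + F = (a - 1) * a * X ^ 2 / (2 * q) := by
        have : q * (X + F) = q * ((a - 1) * a * X ^ 2 / (2 * q)) := by
          rw [← h]; field_simp
        exact mul_left_cancel₀ hq.ne' this
      have hFeq : F = (a - 1) * a * X ^ 2 / (2 * q) - X := by linarith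
      rw [hF] at hFeq
      exact max_eq_right_iff.1 hFeq
    · intro h
      have hFeq : F = (a - 1) * a * X ^ 2 / (2 * q) - X := by
        rw [hF]; exact max_eq_right h
      rw [hFeq]
      field_simp
      ring
end
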